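/- In the setting above, the top-d eigenspace is optimal for worst-case approximation: for any d-dimensional subspace V of ℝ^A, sup over g with Q(g) ≤ ε of the squared distance from g to V is at least ε/(2(1-λ_{d+1})), and this bound is attained by V = span{f₁,…,f_d} (assuming λ_{d+1} < 1). -/

import Mathlib

open Finset

/-- Optimality of the top-`d` eigenspace for worst-case approximation of approximately
view-invariant functions: for any `d`-dimensional subspace `V` there is `g` with `Q(g) ≤ ε`
whose squared distance to `V` is at least `ε/(2(1-λ_{d+1}))`, and for the span of the top
`d` eigenvectors every `g` with `Q(g) ≤ ε` is within that squared distance. -/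
theorem top_eigenspace_optimal (A : Type*) [Fintype A] (n : ℕ)
    (hcard : Fintype.card A = n)
    (pA : A → ℝ) (hpA : ∀ a, 0 < pA a)
    (ip : (A → ℝ) → (A → ℝ) → ℝ) (hip : ∀ f g, ip f g = ∑ a, pA a * f a * g a)
    (T : (A → ℝ) →ₗ[ℝ] (A → ℝ))
    (hsa : ∀ g h : A → ℝ, ip (T g) h = ip g (T h))
    (f : Fin n → A → ℝ) (lam : Fin n → ℝ)
    (hON : ∀ i j : Fin n, ip (f i) (f j) = if i = j then 1 else 0)
    (heig : ∀ i : Fin n, T (f i) = lam i • f i)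
    (hmono : ∀ i j : Fin n, i ≤ j → lam j ≤ lam i)
    (hlam0 : ∀ i, 0 ≤ lam i) (hlam1 : ∀ i, lam i ≤ 1)
    (hcomplete : ∀ g : A → ℝ, g = ∑ i : Fin n, ip g (f i) • f i)
    (d : ℕ) (hd : d < n) (hgap : lam ⟨d, hd⟩ < 1)
    (ε : ℝ) (hε : 0 ≤ ε) :
    (∀ V : Submodule ℝ (A → ℝ), Module.finrank ℝ V = d →
      ∃ g : A → ℝ, 2 * (ip g g - ip g (T g)) ≤ ε ∧
        ∀ h ∈ V, ε / (2 * (1 - lam ⟨d, hd⟩)) ≤ ip (g - h) (g - h)) ∧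
    (∀ g : A → ℝ, 2 * (ip g g - ip g (T g)) ≤ ε →
      ∃ h ∈ Submodule.span ℝ (Set.range fun i : Fin d => f (Fin.castLE hd.le i)),
        ip (g - h) (g - h) ≤ ε / (2 * (1 - lam ⟨d, hd⟩))) := by
  have hgap' : 0 < 1 - lam ⟨d, hd⟩ := by linarith
  have hgap2 : 0 < 2 * (1 - lam ⟨d, hd⟩) := by linarith
  -- basic properties of ip
  have ip_symm : ∀ g h : A → ℝ, ip g h = ip h g := by
    intro g h; simp only [hip]; exact Finset.sum_congr rfl fun a _ => by ring
  have ip_smul_l : ∀ (t : ℝ) (g h : A → ℝ), ip (t • g) h = t * ip g h := by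
    intro t g h
    simp only [hip, Pi.smul_apply, smul_eq_mul, Finset.mul_sum]
    exact Finset.sum_congr rfl fun a _ => by ring
  have ip_sub_l : ∀ g g' h : A → ℝ, ip (g - g') h = ip g h - ip g' h := by
    intro g g' h
    simp only [hip, Pi.sub_apply, ← Finset.sum_sub_distrib]
    exact Finset.sum_congr rfl fun a _ => by ring
  have ip_sub_r : ∀ g h h' : A → ℝ, ip g (h - h') = ip g h - ip g h' := by
    intro g h h'
    rw [ip_symm, ip_sub_l, ip_symm h g, ip_symm h' g]
  have ip_sum_l : ∀ {m : ℕ} (F : Fin m → A → ℝ) (h : A → ℝ),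
      ip (∑ i, F i) h = ∑ i, ip (F i) h := by
    intro m F h
    simp only [hip, Finset.sum_apply]
    have : ∀ a ∈ Finset.univ (α := A),
        pA a * (∑ i, F i a) * h a = ∑ i : Fin m, pA a * F i a * h a := by
      intro a _
      rw [Finset.mul_sum, Finset.sum_mul]
    rw [Finset.sum_congr rfl this, Finset.sum_comm]
  have ip_nonneg : ∀ g : A → ℝ, 0 ≤ ip g g := by
    intro g
    rw [hip]
    apply Finset.sum_nonneg
    intro a _
    have := (hpA a).le
    nlinarith [sq_nonneg (g a)]
  -- Parseval
  have parseval : ∀ g h : A → ℝ, ip g h = ∑ i, ip g (f i) * ip h (f i) := by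
    intro g h
    conv_lhs => rw [hcomplete h]
    rw [ip_symm, ip_sum_l]
    refine Finset.sum_congr rfl fun i _ => ?_
    rw [ip_smul_l, ip_symm (f i) g]
    ring
  have ip_self : ∀ g : A → ℝ, ip g g = ∑ i, (ip g (f i)) ^ 2 := by
    intro g
    rw [parseval]
    exact Finset.sum_congr rfl fun i _ => (sq _).symm
  -- T in coordinates
  have cT : ∀ (g : A → ℝ) (i : Fin n), ip (T g) (f i) = lam i * ip g (f i) := by
    intro g i
    rw [hsa, heig, ip_symm, ip_smul_l, ip_symm]
  have hQ : ∀ g : A → ℝ,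
      2 * (ip g g - ip g (T g)) = 2 * ∑ i, (1 - lam i) * (ip g (f i)) ^ 2 := by
    intro g
    rw [ip_self g, ip_symm g (T g), parseval (T g) g]
    congr 1
    rw [← Finset.sum_sub_distrib]
    refine Finset.sum_congr rfl fun i _ => ?_
    rw [cT]
    ring
  -- coordinates of sums of eigenvectors
  have key : ∀ (m : ℕ) (hm : m ≤ n) (x : Fin m → ℝ) (j : Fin n),
      ip (∑ i : Fin m, x i • f (Fin.castLE hm i)) (f j) =
        if hj : (j : ℕ) < m then x ⟨j, hj⟩ else 0 := by
    intro m hm x j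
    rw [ip_sum_l]
    simp_rw [ip_smul_l, hON]
    split_ifs with hj
    · rw [Finset.sum_eq_single (⟨(j : ℕ), hj⟩ : Fin m)]
      · have : Fin.castLE hm (⟨(j : ℕ), hj⟩ : Fin m) = j := by ext; rfl
        simp [this]
      · intro i _ hij
        have hne : Fin.castLE hm i ≠ j := by
          intro e
          apply hij
          ext
          simpa using congrArg Fin.val e
        simp [hne]
      · simp
    · apply Finset.sum_eq_zero
      intro i _
      have hne : Fin.castLE hm i ≠ j := by
        intro e
        apply hj
        rw [← e]
        exact i.isLt
      simp [hne]
  constructor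
  · -- Part 1: lower bound for arbitrary V
    intro V hV
    haveI : FiniteDimensional ℝ V := inferInstance
    let b : Module.Basis (Fin d) ℝ V := Module.finBasisOfFinrankEq ℝ V hV
    have hdn : d + 1 ≤ n := hd
    set e : Fin (d + 1) → Fin n := Fin.castLE hdn with he
    let M : Matrix (Fin d) (Fin (d + 1)) ℝ := fun j i => ip (f (e i)) ((b j : A → ℝ))
    have hnotinj : ¬ Function.Injective M.mulVecLin := by
      intro hinj
      have hle := LinearMap.finrank_le_finrank_of_injective hinj
      rw [Module.finrank_fin_fun, Module.finrank_fin_fun] at hle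
      omega
    obtain ⟨x, y, hxy, hne⟩ := Function.not_injective_iff.mp hnotinj
    set z : Fin (d + 1) → ℝ := x - y with hz
    have hz0 : z ≠ 0 := sub_ne_zero_of_ne hne
    have hMz : ∀ j : Fin d, ∑ i, M j i * z i = 0 := by
      intro j
      have : M.mulVecLin z = 0 := by
        rw [hz, map_sub, hxy, sub_self]
      have := congrFun this j
      simpa [Matrix.mulVecLin, Matrix.mulVec, dotProduct] using this
    set g₀ : A → ℝ := ∑ i : Fin (d + 1), z i • f (e i) with hg₀
    have cg₀ : ∀ j : Fin n, ip g₀ (f j) = if hj : (j : ℕ) < d + 1 then z ⟨j, hj⟩ else 0 :=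
      key (d + 1) hdn z
    have cg₀e : ∀ i : Fin (d + 1), ip g₀ (f (e i)) = z i := by
      intro i
      rw [cg₀]
      have hi : ((e i : Fin n) : ℕ) < d + 1 := i.isLt
      rw [dif_pos hi]
      congr 1
    -- ip g₀ g₀ = ∑ z i ^2 > 0
    have hSeq : ip g₀ g₀ = ∑ i : Fin (d + 1), z i * z i := by
      conv_lhs => rw [hg₀, ip_sum_l]
      refine Finset.sum_congr rfl fun i _ => ?_
      rw [ip_smul_l, ip_symm, cg₀e]
    have hSpos : 0 < ip g₀ g₀ := by
      rw [hSeq]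
      obtain ⟨i, hi⟩ := Function.ne_iff.mp hz0
      refine Finset.sum_pos' (fun i _ => mul_self_nonneg _) ⟨i, Finset.mem_univ i, ?_⟩
      exact mul_self_pos.mpr hi
    -- orthogonality to V
    have horthb : ∀ j : Fin d, ip g₀ ((b j : A → ℝ)) = 0 := by
      intro j
      rw [hg₀, ip_sum_l]
      have := hMz j
      rw [← this]
      refine Finset.sum_congr rfl fun i _ => ?_
      rw [ip_smul_l]
      ring
    have horth : ∀ h ∈ V, ip g₀ h = 0 := by
      intro h hh
      have hrepr : (⟨h, hh⟩ : V) = ∑ j, b.repr ⟨h, hh⟩ j • b j := (Module.Basis.sum_repr b ⟨h, hh⟩).symm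
      have hh2 : h = ∑ j, b.repr ⟨h, hh⟩ j • ((b j : A → ℝ)) := by
        have := congrArg (Subtype.val) hrepr
        simpa only [Submodule.coe_sum, Submodule.coe_smul] using this
      rw [hh2, ip_symm, ip_sum_l]
      apply Finset.sum_eq_zero
      intro j _
      rw [ip_smul_l, ip_symm, horthb]
      ring
    -- scaling
    set tgt : ℝ := ε / (2 * (1 - lam ⟨d, hd⟩)) with htgt
    have htgt0 : 0 ≤ tgt := div_nonneg hε hgap2.le
    set t : ℝ := Real.sqrt (tgt / ip g₀ g₀) with ht
    have ht2 : t * t = tgt / ip g₀ g₀ := Real.mul_self_sqrt (div_nonneg htgt0 hSpos.le)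
    set g : A → ℝ := t • g₀ with hgdef
    have hgg : ip g g = tgt := by
      rw [hgdef, ip_smul_l, ip_symm, ip_smul_l, ip_symm]
      rw [show t * (t * ip g₀ g₀) = t * t * ip g₀ g₀ by ring, ht2,
        div_mul_cancel₀ _ hSpos.ne']
    refine ⟨g, ?_, ?_⟩
    · -- Q(g) ≤ ε
      rw [hQ]
      have hcg : ∀ j : Fin n, ip g (f j) = t * ip g₀ (f j) := by
        intro j; rw [hgdef, ip_smul_l]
      have hterm : ∀ j : Fin n,
          (1 - lam j) * (ip g (f j)) ^ 2 ≤ (1 - lam ⟨d, hd⟩) * (ip g (f j)) ^ 2 := by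
        intro j
        by_cases hj : (j : ℕ) < d + 1
        · have hle : (⟨d, hd⟩ : Fin n) ≤ j ∨ j ≤ (⟨d, hd⟩ : Fin n) := le_total _ _
          have hjd : j ≤ (⟨d, hd⟩ : Fin n) := by
            change (j : ℕ) ≤ d
            omega
          have := hmono j ⟨d, hd⟩ hjd
          nlinarith [sq_nonneg (ip g (f j))]
        · have : ip g (f j) = 0 := by
            rw [hcg, cg₀, dif_neg hj, mul_zero]
          rw [this]
          simp
      have hsum : ∑ j, (1 - lam j) * (ip g (f j)) ^ 2
          ≤ ∑ j, (1 - lam ⟨d, hd⟩) * (ip g (f j)) ^ 2 :=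
        Finset.sum_le_sum fun j _ => hterm j
      have hsum2 : ∑ j, (1 - lam ⟨d, hd⟩) * (ip g (f j)) ^ 2
          = (1 - lam ⟨d, hd⟩) * ip g g := by
        rw [ip_self, Finset.mul_sum]
      have hfin : (1 - lam ⟨d, hd⟩) * tgt = ε / 2 := by
        rw [htgt]
        field_simp
      calc 2 * ∑ j, (1 - lam j) * (ip g (f j)) ^ 2
          ≤ 2 * ((1 - lam ⟨d, hd⟩) * ip g g) := by
            rw [← hsum2]; linarith
        _ = ε := by rw [hgg, hfin]; ring
    · -- distance bound
      intro h hh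
      have hgh : ip g h = 0 := by
        rw [hgdef, ip_smul_l, horth h hh, mul_zero]
      have hexp : ip (g - h) (g - h) = ip g g - ip g h - (ip h g - ip h h) := by
        rw [ip_sub_l, ip_sub_r, ip_sub_r]
      have hsym : ip h g = ip g h := ip_symm h g
      have hhh := ip_nonneg h
      rw [hexp, hsym, hgh, hgg]
      linarith
  · -- Part 2: upper bound for the top-d eigenspace
    intro g hg
    set h : A → ℝ := ∑ i : Fin d, ip g (f (Fin.castLE hd.le i)) • f (Fin.castLE hd.le i)
      with hhdef
    refine ⟨h, ?_, ?_⟩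
    · exact Submodule.sum_mem _ fun i _ =>
        Submodule.smul_mem _ _ (Submodule.subset_span ⟨i, rfl⟩)
    · have chj : ∀ j : Fin n, ip h (f j)
          = if hj : (j : ℕ) < d then ip g (f j) else 0 := by
        intro j
        rw [hhdef, key d hd.le _ j]
        split_ifs with hj
        · congr 1
        · rfl
      have cdiff : ∀ j : Fin n, ip (g - h) (f j)
          = if (j : ℕ) < d then 0 else ip g (f j) := by
        intro j
        rw [ip_sub_l, chj]
        split_ifs with hj
        · simp
        · simp
      have hdist : ip (g - h) (g - h)
          = ∑ j : Fin n, (if (j : ℕ) < d then 0 else ip g (f j)) ^ 2 := by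
        rw [ip_self]
        exact Finset.sum_congr rfl fun j _ => by rw [cdiff]
      have hbound : (1 - lam ⟨d, hd⟩) * ip (g - h) (g - h)
          ≤ ∑ j, (1 - lam j) * (ip g (f j)) ^ 2 := by
        rw [hdist, Finset.mul_sum]
        refine Finset.sum_le_sum fun j _ => ?_
        by_cases hj : (j : ℕ) < d
        · rw [if_pos hj]
          have h1 := hlam1 j
          nlinarith [sq_nonneg (ip g (f j))]
        · rw [if_neg hj]
          have hjd : (⟨d, hd⟩ : Fin n) ≤ j := by
            change d ≤ (j : ℕ)
            omega
          have := hmono ⟨d, hd⟩ j hjd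
          nlinarith [sq_nonneg (ip g (f j))]
      have hQg : 2 * ∑ j, (1 - lam j) * (ip g (f j)) ^ 2 ≤ ε := by
        rw [← hQ]; exact hg
      rw [le_div_iff₀ hgap2]
      nlinarith [hbound, hQg]
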